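/- Let 𝔅 be a bornology on a topological space X with a closed base 𝔅₀, and suppose X is 𝔅-Lindelöf. If |𝔅₀| < 𝔯 (the reaping number), then X satisfies Split(𝒪_𝔅, 𝒪_𝔅): every open 𝔅-cover contains two disjoint subfamilies each of which is an open 𝔅-cover of X. -/

import Mathlib

/-!
Thin out the given 𝔅-cover to a countable one `V`. In a 𝔅-cover every `b ∈ 𝔅` lies in infinitely
many members: otherwise add to `b` one point outside each of the finitely many members containing
it, and no member contains the resulting bounded set. So every `b ∈ 𝔅₀` gives an infinite subset
`{v ∈ V | b ⊆ v}` of the countable set `V`; fewer than `𝔯` of them can be reaped by a single `R`,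
and `R`, `V \ R` are then two disjoint 𝔅-covers.
-/

open Set

universe u

def IsBornology {X : Type u} (B : Set (Set X)) : Prop :=
  ⋃₀ B = univ ∧ (∀ b ∈ B, ∀ b' ⊆ b, b' ∈ B) ∧ ∀ b ∈ B, ∀ b' ∈ B, b ∪ b' ∈ B

def HasClosedBase {X : Type u} [TopologicalSpace X] (B : Set (Set X)) : Prop :=
  ∃ B0 ⊆ B, (∀ b ∈ B0, IsClosed b) ∧ ∀ b ∈ B, ∃ b0 ∈ B0, b ⊆ b0

def HasCompactBase {X : Type u} [TopologicalSpace X] (B : Set (Set X)) : Prop :=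
  ∃ B0 ⊆ B, (∀ b ∈ B0, IsCompact b) ∧ ∀ b ∈ B, ∃ b0 ∈ B0, b ⊆ b0

def IsBCover {X : Type u} [TopologicalSpace X] (B U : Set (Set X)) : Prop :=
  (∀ u ∈ U, IsOpen u) ∧ univ ∉ U ∧ ∀ b ∈ B, ∃ u ∈ U, b ⊆ u

def IsGammaBCover {X : Type u} [TopologicalSpace X] (B U : Set (Set X)) : Prop :=
  U.Infinite ∧ (∀ u ∈ U, IsOpen u ∧ u ≠ univ) ∧ ∀ b ∈ B, {u ∈ U | ¬ b ⊆ u}.Finite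

def IsOpenCover {X : Type u} [TopologicalSpace X] (U : Set (Set X)) : Prop :=
  (∀ u ∈ U, IsOpen u) ∧ ⋃₀ U = univ

def IsOmegaCover {X : Type u} [TopologicalSpace X] (U : Set (Set X)) : Prop :=
  (∀ u ∈ U, IsOpen u) ∧ univ ∉ U ∧ ∀ F : Set X, F.Finite → ∃ u ∈ U, F ⊆ u

def IsGammaCover {X : Type u} [TopologicalSpace X] (U : Set (Set X)) : Prop :=
  U.Infinite ∧ (∀ u ∈ U, IsOpen u) ∧ ∀ x : X, {u ∈ U | x ∉ u}.Finite

def BLindelof {X : Type u} [TopologicalSpace X] (B : Set (Set X)) : Prop :=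
  ∀ U, IsBCover B U → ∃ V ⊆ U, V.Countable ∧ IsBCover B V

def S1 {X : Type u} (A C : Set (Set X) → Prop) : Prop :=
  ∀ U : ℕ → Set (Set X), (∀ n, A (U n)) →
    ∃ V : ℕ → Set X, (∀ n, V n ∈ U n) ∧ C (Set.range V)

def Sfin {X : Type u} (A C : Set (Set X) → Prop) : Prop :=
  ∀ U : ℕ → Set (Set X), (∀ n, A (U n)) →
    ∃ V : ℕ → Set (Set X), (∀ n, (V n).Finite ∧ V n ⊆ U n) ∧ C (⋃ n, V n)

def Ufin {X : Type u} (A C : Set (Set X) → Prop) : Prop :=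
  ∀ U : ℕ → Set (Set X), (∀ n, A (U n)) →
    ∃ V : ℕ → Set (Set X), (∀ n, (V n).Finite ∧ V n ⊆ U n) ∧
      ((∃ n, ⋃₀ V n = univ) ∨ C {s | ∃ n, s = ⋃₀ V n})
noncomputable def reapNum : Cardinal :=
  sInf {c | ∃ A : Set (Set ℕ), Cardinal.mk A = c ∧ (∀ a ∈ A, a.Infinite) ∧
    ∀ R : Set ℕ, R.Infinite → ∃ P ∈ A, (P ∩ R).Finite ∨ (P \ R).Finite}

open Cardinal

universe v w

section Bornology

variable {X : Type u} {B : Set (Set X)}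

theorem IsBornology.singleton_mem (hB : IsBornology B) (x : X) : {x} ∈ B := by
  obtain ⟨b, hb, hxb⟩ : x ∈ ⋃₀ B := hB.1 ▸ mem_univ x
  exact hB.2.1 b hb {x} (singleton_subset_iff.mpr hxb)

theorem IsBornology.finite_mem (hB : IsBornology B) (hne : B.Nonempty) {F : Set X}
    (hF : F.Finite) : F ∈ B := by
  induction F, hF using Set.Finite.induction_on with
  | empty =>
    obtain ⟨b, hb⟩ := hne
    exact hB.2.1 b hb ∅ (empty_subset b)
  | @insert x s _ _ ih =>
    simpa only [singleton_union] using hB.2.2 {x} (hB.singleton_mem x) s ih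

variable [TopologicalSpace X] {V : Set (Set X)}

theorem IsBCover.infinite_setOf_subset (hB : IsBornology B) (hV : IsBCover B V) {b : Set X}
    (hb : b ∈ B) : {u ∈ V | b ⊆ u}.Infinite := by
  intro hfin
  have hout : ∀ u ∈ V, ∃ x, x ∉ u := fun u hu =>
    not_forall.mp fun h => hV.2.1 (eq_univ_of_forall h ▸ hu)
  have : Nonempty X := by
    obtain ⟨u, hu, -⟩ := hV.2.2 b hb
    obtain ⟨x, -⟩ := hout u hu
    exact ⟨x⟩
  choose! pt hpt using hout
  have hF : pt '' {u ∈ V | b ⊆ u} ∈ B := hB.finite_mem ⟨b, hb⟩ (hfin.image pt)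
  obtain ⟨u, huV, hbu⟩ := hV.2.2 _ (hB.2.2 b hb _ hF)
  exact hpt u huV (hbu (Or.inr ⟨u, ⟨huV, subset_union_left.trans hbu⟩, rfl⟩))

theorem IsBCover.mono_of_base {B0 W : Set (Set X)} (hV : IsBCover B V) (hWV : W ⊆ V)
    (hcof : ∀ b ∈ B, ∃ b0 ∈ B0, b ⊆ b0) (hW : ∀ b0 ∈ B0, ∃ w ∈ W, b0 ⊆ w) :
    IsBCover B W := by
  refine ⟨fun w hw => hV.1 w (hWV hw), fun h => hV.2.1 (hWV h), fun b hb => ?_⟩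
  obtain ⟨b0, hb0, hbb0⟩ := hcof b hb
  obtain ⟨w, hw, hb0w⟩ := hW b0 hb0
  exact ⟨w, hw, hbb0.trans hb0w⟩

end Bornology

section Reaping

variable {ι : Type v}

theorem exists_reaps_nat_of_mk_lt_reapNum (Q : ι → Set ℕ) (hQ : ∀ i, (Q i).Infinite)
    (hcard : #ι < lift.{v} reapNum) :
    ∃ R : Set ℕ, ∀ i, (Q i ∩ R).Infinite ∧ (Q i \ R).Infinite := by
  by_contra! h
  have hle : reapNum ≤ #(range Q) := by
    refine csInf_le' ⟨range Q, rfl, forall_mem_range.mpr hQ, fun R _ => ?_⟩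
    obtain ⟨i, hi⟩ := h R
    by_cases hfin : (Q i ∩ R).Finite
    · exact ⟨Q i, mem_range_self i, Or.inl hfin⟩
    · exact ⟨Q i, mem_range_self i, Or.inr (hi hfin)⟩
  have hrange : lift.{v} #(range Q) ≤ #ι := by simpa using mk_range_le_lift (f := Q)
  exact (lift_le.mpr hle |>.trans hrange).not_gt hcard

theorem exists_reaps_of_mk_lt_reapNum {α : Type w} [Countable α] (Q : ι → Set α)
    (hQ : ∀ i, (Q i).Infinite) (hcard : #ι < lift.{v} reapNum) :
    ∃ R : Set α, ∀ i, (Q i ∩ R).Infinite ∧ (Q i \ R).Infinite := by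
  obtain ⟨f, hf⟩ := exists_injective_nat α
  obtain ⟨R, hR⟩ :=
    exists_reaps_nat_of_mk_lt_reapNum (fun i => f '' Q i) (fun i => (hQ i).image hf.injOn) hcard
  refine ⟨f ⁻¹' R, fun i => ⟨?_, ?_⟩⟩
  · exact Infinite.of_image f (by rw [image_inter_preimage]; exact (hR i).1)
  · exact Infinite.of_image f (by rw [image_sdiff_preimage]; exact (hR i).2)

end Reaping

theorem stmt17_general {X : Type u} [TopologicalSpace X] (B B0 : Set (Set X)) (hB : IsBornology B)
    (hsub : B0 ⊆ B) (hcof : ∀ b ∈ B, ∃ b0 ∈ B0, b ⊆ b0)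
    (hL : BLindelof B) (hcard : Cardinal.mk B0 < Cardinal.lift.{u} reapNum) :
    ∀ U : Set (Set X), IsBCover B U →
      ∃ V1 V2 : Set (Set X), V1 ⊆ U ∧ V2 ⊆ U ∧ Disjoint V1 V2 ∧
        IsBCover B V1 ∧ IsBCover B V2 := by
  intro U hU
  obtain ⟨V, hVU, hVc, hV⟩ := hL U hU
  have : Countable V := hVc.to_subtype
  let Q : B0 → Set V := fun b0 => Subtype.val ⁻¹' {u | (b0 : Set X) ⊆ u}
  have hQ : ∀ b0, (Q b0).Infinite := fun b0 =>
    Infinite.of_image Subtype.val <| by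
      rw [Subtype.image_preimage_coe]; exact hV.infinite_setOf_subset hB (hsub b0.2)
  obtain ⟨R, hR⟩ := exists_reaps_of_mk_lt_reapNum Q hQ hcard
  have hcover : ∀ S : Set V, (∀ b0 : B0, (Q b0 ∩ S).Nonempty) → IsBCover B (Subtype.val '' S) :=
    fun S hS => hV.mono_of_base (Subtype.coe_image_subset V S) hcof fun b0 hb0 =>
      let ⟨v, hvQ, hvS⟩ := hS ⟨b0, hb0⟩
      ⟨v, mem_image_of_mem _ hvS, hvQ⟩
  refine ⟨Subtype.val '' R, Subtype.val '' Rᶜ, ?_, ?_, ?_, ?_, ?_⟩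
  · exact (Subtype.coe_image_subset V R).trans hVU
  · exact (Subtype.coe_image_subset V Rᶜ).trans hVU
  · exact (disjoint_image_iff Subtype.val_injective).mpr disjoint_compl_right
  · exact hcover R fun b0 => (hR b0).1.nonempty
  · exact hcover Rᶜ fun b0 => (hR b0).2.nonempty

theorem stmt17 {X : Type u} [TopologicalSpace X] (B B0 : Set (Set X)) (hB : IsBornology B)
    (hsub : B0 ⊆ B) (hcl : ∀ b ∈ B0, IsClosed b) (hcof : ∀ b ∈ B, ∃ b0 ∈ B0, b ⊆ b0)
    (hL : BLindelof B) (hcard : Cardinal.mk B0 < Cardinal.lift.{u} reapNum) :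
    ∀ U : Set (Set X), IsBCover B U →
      ∃ V1 V2 : Set (Set X), V1 ⊆ U ∧ V2 ⊆ U ∧ Disjoint V1 V2 ∧
        IsBCover B V1 ∧ IsBCover B V2 :=
  stmt17_general B B0 hB hsub hcof hL hcard
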